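/- Let S be a symmetric unitary complex matrix on N-tuple indices. If there exist unitary matrices U_p (d_p×d_p) such that (⊗_p U_p)·S·(⊗_p U_p)ᵀ is diagonal (i.e. the conjugation θ(v) = S·conj(v) is Prod-measurable), then: (i) for every p the partial trace tr_{¬p}(S) is a symmetric matrix, and (ii) the matrix X = S⋆·(tr_{¬1}(S) ⊗ ⋯ ⊗ tr_{¬N}(S)) is normal, i.e. X·X⋆ = X⋆·X. -/

import Mathlib

open Matrix Kronecker

noncomputable section

/-- N-fold Kronecker product of matrices, on dependent-tuple indices. -/
def nKron {N : ℕ} {ι : Fin N → Type} (A : ∀ p, Matrix (ι p) (ι p) ℂ) :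
    Matrix (∀ p, ι p) (∀ p, ι p) ℂ :=
  Matrix.of fun i j => ∏ p, A p (i p) (j p)

/-- Partial trace over all subsystems except `p`. -/
def ptrace {N : ℕ} {d : Fin N → ℕ} (S : Matrix (∀ p, Fin (d p)) (∀ p, Fin (d p)) ℂ)
    (p : Fin N) : Matrix (Fin (d p)) (Fin (d p)) ℂ :=
  Matrix.of fun a b =>
    ∑ k : ∀ q, Fin (d q), if k p = a then S k (Function.update k p b) else 0

/-!
Write `W = ⊗ₚ Uₚ`. Diagonality of `W S Wᵀ` expands `S = ∑ₘ λₘ vₘ vₘᵀ`, where `vₘ`, the conjugate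
of row `m` of `W`, is the product vector `⊗ₚ conj(row mₚ of Uₚ)`. The partial trace of `v vᵀ` for a
product vector `v = ⊗ₚ xₚ` is a multiple of `xₚ xₚᵀ`, and `Uₚ` maps the conjugate of its own row `c`
to the basis vector `e_c`; so every `Uₚ tr_{¬p}(S) Uₚᵀ` is diagonal, hence so is `W T Wᵀ` for
`T = ⊗ₚ tr_{¬p}(S)`. Finally `S⋆ T = Wᵀ ((W S Wᵀ)⋆ (W T Wᵀ)) (Wᵀ)⋆` is unitarily similar to a
diagonal matrix.
-/

namespace Matrix

variable {n α : Type*}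

theorem isDiag_sum [AddCommMonoid α] {ι : Type*} {s : Finset ι} {A : ι → Matrix n n α}
    (h : ∀ i ∈ s, (A i).IsDiag) : (∑ i ∈ s, A i).IsDiag :=
  Finset.sum_induction _ IsDiag (fun _ _ => IsDiag.add) isDiag_zero h

variable [Fintype n] [DecidableEq n]

theorem IsDiag.mul [NonUnitalNonAssocSemiring α] {A B : Matrix n n α} (hA : A.IsDiag)
    (hB : B.IsDiag) : (A * B).IsDiag := by
  rw [← hA.diagonal_diag, ← hB.diagonal_diag, diagonal_mul_diagonal]
  exact isDiag_diagonal _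

theorem IsDiag.isStarNormal [CommSemiring α] [StarRing α] {A : Matrix n n α} (h : A.IsDiag) :
    IsStarNormal A := by
  rw [← h.diagonal_diag]
  exact ⟨by rw [star_eq_conjTranspose, diagonal_conjTranspose]; exact commute_diagonal _ _⟩

section Unitary

variable [CommRing α] [StarRing α] {W : Matrix n n α}

theorem eq_conjTranspose_mul_mul_transpose_mul (hW : W ∈ unitaryGroup n α) (A : Matrix n n α) :
    A = Wᴴ * (W * A * Wᵀ) * (Wᵀ)ᴴ := by
  have hWt : Wᵀ * (Wᵀ)ᴴ = 1 := mem_unitaryGroup_iff.mp (transpose_mem_unitaryGroup_iff.mpr hW)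
  have hWW : Wᴴ * W = 1 := mem_unitaryGroup_iff'.mp hW
  simp only [Matrix.mul_assoc, hWt, Matrix.mul_one]
  simp only [← Matrix.mul_assoc, hWW, Matrix.one_mul]

theorem conjTranspose_mul_eq_transpose_mul_mul_conjTranspose (hW : W ∈ unitaryGroup n α)
    (A B : Matrix n n α) : Aᴴ * B = Wᵀ * ((W * A * Wᵀ)ᴴ * (W * B * Wᵀ)) * (Wᵀ)ᴴ := by
  have hWt : Wᵀ * (Wᵀ)ᴴ = 1 := mem_unitaryGroup_iff.mp (transpose_mem_unitaryGroup_iff.mpr hW)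
  have hWW : Wᴴ * W = 1 := mem_unitaryGroup_iff'.mp hW
  simp only [conjTranspose_mul, Matrix.mul_assoc, hWt, Matrix.mul_one]
  simp only [← Matrix.mul_assoc, hWt, hWW, Matrix.one_mul]

theorem isStarNormal_conjTranspose_mul_of_isDiag {A B : Matrix n n α}
    (hW : W ∈ unitaryGroup n α) (hA : (W * A * Wᵀ).IsDiag) (hB : (W * B * Wᵀ).IsDiag) :
    IsStarNormal (Aᴴ * B) := by
  have := (hA.conjTranspose.mul hB).isStarNormal
  rw [conjTranspose_mul_eq_transpose_mul_mul_conjTranspose hW]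
  exact IsStarNormal.map (Unitary.conjStarAlgAut α _ ⟨Wᵀ, transpose_mem_unitaryGroup_iff.mpr hW⟩) _

theorem eq_sum_smul_vecMulVec_of_isDiag {A : Matrix n n α} (hW : W ∈ unitaryGroup n α)
    (hA : (W * A * Wᵀ).IsDiag) :
    A = ∑ m, (W * A * Wᵀ) m m • vecMulVec (star (W m)) (star (W m)) := by
  conv_lhs => rw [eq_conjTranspose_mul_mul_transpose_mul hW A, ← hA.diagonal_diag]
  generalize W * A * Wᵀ = D
  ext i j
  simp only [mul_apply, diagonal_apply, mul_ite, mul_zero, Finset.sum_ite_eq', Finset.mem_univ,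
    if_true, conjTranspose_apply, transpose_apply, Matrix.sum_apply, Matrix.smul_apply,
    vecMulVec_apply, Pi.star_apply, smul_eq_mul, diag_apply]
  exact Finset.sum_congr rfl fun m _ => by ring

theorem mulVec_star_row (hW : W ∈ unitaryGroup n α) (c : n) :
    W *ᵥ star (W c) = Pi.single c 1 := by
  ext i
  have := congr_fun₂ (mem_unitaryGroup_iff.mp hW) i c
  rw [mul_apply] at this
  rw [mulVec, dotProduct, Pi.single_apply, ← one_apply, ← this]
  rfl

theorem isDiag_mul_vecMulVec_star_row_mul_transpose (hW : W ∈ unitaryGroup n α) (c : n) :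
    (W * vecMulVec (star (W c)) (star (W c)) * Wᵀ).IsDiag := by
  rw [mul_vecMulVec, vecMulVec_mul, vecMul_transpose, mulVec_star_row hW]
  intro i j hij
  by_cases hi : i = c
  · simp [vecMulVec_apply, hi, Ne.symm (hi ▸ hij)]
  · simp [vecMulVec_apply, hi]

end Unitary

end Matrix

def nKronVec {N : ℕ} {ι : Fin N → Type} (x : ∀ p, ι p → ℂ) : (∀ p, ι p) → ℂ :=
  fun k => ∏ p, x p (k p)

section NKron

variable {N : ℕ} {ι : Fin N → Type}

theorem nKron_transpose (A : ∀ p, Matrix (ι p) (ι p) ℂ) :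
    (nKron A)ᵀ = nKron fun p => (A p)ᵀ := rfl

theorem nKron_conjTranspose (A : ∀ p, Matrix (ι p) (ι p) ℂ) :
    (nKron A)ᴴ = nKron fun p => (A p)ᴴ := by
  ext i j
  simp [nKron]

theorem star_nKron_row (A : ∀ p, Matrix (ι p) (ι p) ℂ) (m : ∀ p, ι p) :
    star (nKron A m) = nKronVec fun p => star (A p (m p)) := by
  ext k
  simp [nKron, nKronVec]

theorem nKron_isDiag {A : ∀ p, Matrix (ι p) (ι p) ℂ} (h : ∀ p, (A p).IsDiag) :
    (nKron A).IsDiag := fun _ _ hij =>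
  have ⟨p, hp⟩ := Function.ne_iff.mp hij
  Finset.prod_eq_zero (Finset.mem_univ p) (h p hp)

theorem nKron_one [∀ p, DecidableEq (ι p)] :
    nKron (fun p => (1 : Matrix (ι p) (ι p) ℂ)) = 1 := by
  ext i j
  by_cases h : i = j
  · subst h; simp [nKron]
  · obtain ⟨p, hp⟩ := Function.ne_iff.mp h
    rw [one_apply_ne h]
    exact Finset.prod_eq_zero (Finset.mem_univ p) (one_apply_ne hp)

variable [∀ p, Fintype (ι p)]

theorem nKron_mul (A B : ∀ p, Matrix (ι p) (ι p) ℂ) :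
    nKron A * nKron B = nKron fun p => A p * B p := by
  ext i j
  simp only [mul_apply, nKron, of_apply, Fintype.prod_sum, Finset.prod_mul_distrib]

theorem nKron_mem_unitaryGroup [∀ p, DecidableEq (ι p)] {U : ∀ p, Matrix (ι p) (ι p) ℂ}
    (hU : ∀ p, U p ∈ unitaryGroup (ι p) ℂ) : nKron U ∈ unitaryGroup (∀ p, ι p) ℂ := by
  rw [mem_unitaryGroup_iff', star_eq_conjTranspose, nKron_conjTranspose, nKron_mul, ← nKron_one]
  exact congrArg nKron (funext fun p => mem_unitaryGroup_iff'.mp (hU p))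

end NKron

section PartialTrace

variable {N : ℕ} {d : Fin N → ℕ}

theorem ptrace_apply (S : Matrix (∀ p, Fin (d p)) (∀ p, Fin (d p)) ℂ) (p : Fin N)
    (a b : Fin (d p)) :
    ptrace S p a b = ∑ r : ∀ q : {q // q ≠ p}, Fin (d q),
      S ((Equiv.piSplitAt p _).symm (a, r)) ((Equiv.piSplitAt p _).symm (b, r)) := by
  set e := Equiv.piSplitAt p fun q => Fin (d q)
  have hupdate : ∀ x r, Function.update (e.symm (x, r)) p b = e.symm (b, r) := by
    intro x r
    ext q
    by_cases hq : q = p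
    · subst hq; simp [e]
    · simp [e, hq]
  rw [ptrace, of_apply, ← e.symm.sum_comp, Fintype.sum_prod_type]
  simp [e, hupdate]

theorem ptrace_transpose (S : Matrix (∀ p, Fin (d p)) (∀ p, Fin (d p)) ℂ) (p : Fin N) :
    ptrace Sᵀ p = (ptrace S p)ᵀ := by
  ext a b
  simp [ptrace_apply]

theorem ptrace_sum {ι : Type*} (s : Finset ι)
    (S : ι → Matrix (∀ p, Fin (d p)) (∀ p, Fin (d p)) ℂ) (p : Fin N) :
    ptrace (∑ m ∈ s, S m) p = ∑ m ∈ s, ptrace (S m) p := by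
  ext a b
  simp only [ptrace_apply, Matrix.sum_apply]
  exact Finset.sum_comm

theorem ptrace_smul (c : ℂ) (S : Matrix (∀ p, Fin (d p)) (∀ p, Fin (d p)) ℂ) (p : Fin N) :
    ptrace (c • S) p = c • ptrace S p := by
  ext a b
  simp [ptrace_apply, Finset.mul_sum]

theorem nKronVec_piSplitAt_symm (x : ∀ p, Fin (d p) → ℂ) (p : Fin N) (a : Fin (d p))
    (r : ∀ q : {q // q ≠ p}, Fin (d q)) :
    nKronVec x ((Equiv.piSplitAt p _).symm (a, r)) = x p a * ∏ q : {q // q ≠ p}, x q (r q) := by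
  rw [nKronVec, Fintype.prod_eq_mul_prod_subtype_ne _ p]
  congr 1
  · simp
  · exact Finset.prod_congr rfl fun q _ => by simp [q.2]

theorem ptrace_vecMulVec_nKronVec (x y : ∀ p, Fin (d p) → ℂ) (p : Fin N) :
    ptrace (vecMulVec (nKronVec x) (nKronVec y)) p =
      (∏ q : {q // q ≠ p}, x q ⬝ᵥ y q) • vecMulVec (x p) (y p) := by
  ext a b
  simp only [ptrace_apply, vecMulVec_apply, nKronVec_piSplitAt_symm, dotProduct,
    Fintype.prod_sum, Matrix.smul_apply, smul_eq_mul, Finset.sum_mul, Finset.prod_mul_distrib]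
  exact Finset.sum_congr rfl fun r _ => by ring

theorem isDiag_mul_ptrace_mul_transpose {U : ∀ p, Matrix (Fin (d p)) (Fin (d p)) ℂ}
    (hU : ∀ p, U p ∈ unitaryGroup (Fin (d p)) ℂ)
    {S : Matrix (∀ p, Fin (d p)) (∀ p, Fin (d p)) ℂ} (hS : (nKron U * S * (nKron U)ᵀ).IsDiag)
    (p : Fin N) : (U p * ptrace S p * (U p)ᵀ).IsDiag := by
  rw [eq_sum_smul_vecMulVec_of_isDiag (nKron_mem_unitaryGroup hU) hS, ptrace_sum]
  simp only [ptrace_smul, star_nKron_row, ptrace_vecMulVec_nKronVec, Finset.mul_sum,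
    Finset.sum_mul, Matrix.mul_smul, Matrix.smul_mul]
  exact isDiag_sum fun m _ =>
    ((isDiag_mul_vecMulVec_star_row_mul_transpose (hU p) (m p)).smul _).smul _

end PartialTrace

theorem stmt8_general {N : ℕ} {d : Fin N → ℕ}
    (S : Matrix (∀ p, Fin (d p)) (∀ p, Fin (d p)) ℂ) (hs : Sᵀ = S)
    (hprod : ∃ U : ∀ p, Matrix (Fin (d p)) (Fin (d p)) ℂ,
      (∀ p, (U p)ᴴ * U p = 1) ∧ (nKron U * S * (nKron U)ᵀ).IsDiag) :
    (∀ p, (ptrace S p)ᵀ = ptrace S p) ∧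
    (Sᴴ * nKron (fun p => ptrace S p)) * (Sᴴ * nKron (fun p => ptrace S p))ᴴ =
      (Sᴴ * nKron (fun p => ptrace S p))ᴴ * (Sᴴ * nKron (fun p => ptrace S p)) := by
  obtain ⟨U, hUU, hS⟩ := hprod
  have hU : ∀ p, U p ∈ unitaryGroup (Fin (d p)) ℂ := fun p => mem_unitaryGroup_iff'.mpr (hUU p)
  refine ⟨fun p => by rw [← ptrace_transpose, hs], ?_⟩
  have hT : (nKron U * nKron (ptrace S) * (nKron U)ᵀ).IsDiag := by
    rw [nKron_transpose, nKron_mul, nKron_mul]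
    exact nKron_isDiag fun p => isDiag_mul_ptrace_mul_transpose hU hS p
  have hnormal := isStarNormal_conjTranspose_mul_of_isDiag (nKron_mem_unitaryGroup hU) hS hT
  exact hnormal.star_comm_self.eq.symm

theorem stmt8 {N : ℕ} {d : Fin N → ℕ}
    (S : Matrix (∀ p, Fin (d p)) (∀ p, Fin (d p)) ℂ) (hs : Sᵀ = S) (hu : Sᴴ * S = 1)
    (hprod : ∃ U : ∀ p, Matrix (Fin (d p)) (Fin (d p)) ℂ,
      (∀ p, (U p)ᴴ * U p = 1) ∧ (nKron U * S * (nKron U)ᵀ).IsDiag) :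
    (∀ p, (ptrace S p)ᵀ = ptrace S p) ∧
    (Sᴴ * nKron (fun p => ptrace S p)) * (Sᴴ * nKron (fun p => ptrace S p))ᴴ =
      (Sᴴ * nKron (fun p => ptrace S p))ᴴ * (Sᴴ * nKron (fun p => ptrace S p)) :=
  stmt8_general S hs hprod
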